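/- Acceptability of an assumption under the preferred semantics is a disjunctive property in frameworks with at least 4 assumptions: with base rules R = {contrary(B) ← A, D ← C}, witness rules R_1 = {contrary(A) ← C}, R_2 = {contrary(A) ← D}, the assumption B belongs to some preferred extension of the framework with rule set R ∪ S for every nonempty S ⊆ {R_1, R_2}, but belongs to no preferred extension when S = {}. -/

import Mathlib

/-- A Bipolar ABA rule `head ← body` (body is a single assumption). -/
structure ABARule (S : Type) where
  head : S
  body : S

/-- `Derives R a b`: there is a deduction (chain of rules in `R`) from `a` to `b`. -/
def Derives {S : Type} (R : Set (ABARule S)) : S → S → Prop :=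
  Relation.ReflTransGen fun a b => (⟨b, a⟩ : ABARule S) ∈ R

/-- `Δ` attacks `β` iff the contrary of `β` is deducible from some member of `Δ`. -/
def Attacks {S : Type} (co : S → S) (R : Set (ABARule S)) (Delta : Set S) (b : S) : Prop :=
  ∃ a ∈ Delta, Derives R a (co b)

/-- `Δ` attacks set `B` iff it attacks some member of `B`. -/
def AttacksSet {S : Type} (co : S → S) (R : Set (ABARule S)) (Delta B : Set S) : Prop :=
  ∃ b ∈ B, Attacks co R Delta b

/-- `Δ` is conflict-free iff it does not attack itself. -/
def ConflictFree {S : Type} (co : S → S) (R : Set (ABARule S)) (Delta : Set S) : Prop :=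
  ¬ AttacksSet co R Delta Delta

/-- Deductive closure of `Δ` within the assumptions `asm`. -/
def Cl {S : Type} (asm : Set S) (R : Set (ABARule S)) (Delta : Set S) : Set S :=
  {a | a ∈ asm ∧ ∃ d ∈ Delta, Derives R d a}

/-- `Δ` is closed iff `Δ = Cl(Δ)`. -/
def BABAClosed {S : Type} (asm : Set S) (R : Set (ABARule S)) (Delta : Set S) : Prop :=
  Cl asm R Delta = Delta

/-- Admissibility: closed, conflict-free, and counter-attacks every closed attacker. -/
def Admissible {S : Type} (asm : Set S) (co : S → S) (R : Set (ABARule S))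
    (Delta : Set S) : Prop :=
  Delta ⊆ asm ∧ BABAClosed asm R Delta ∧ ConflictFree co R Delta ∧
    ∀ B ⊆ asm, BABAClosed asm R B → AttacksSet co R B Delta → AttacksSet co R Delta B

/-- Preferred: ⊆-maximally admissible. -/
def Preferred {S : Type} (asm : Set S) (co : S → S) (R : Set (ABARule S))
    (Delta : Set S) : Prop :=
  Admissible asm co R Delta ∧
    ∀ D', Admissible asm co R D' → Delta ⊆ D' → D' = Delta

/-- `Δ` defends `α` iff `Δ` attacks every closed set attacking `α`. -/
def Defends {S : Type} (asm : Set S) (co : S → S) (R : Set (ABARule S))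
    (Delta : Set S) (a : S) : Prop :=
  ∀ B ⊆ asm, BABAClosed asm R B → Attacks co R B a → AttacksSet co R Delta B

/-- Complete: admissible and containing exactly the assumptions it defends. -/
def CompleteExt {S : Type} (asm : Set S) (co : S → S) (R : Set (ABARule S))
    (Delta : Set S) : Prop :=
  Admissible asm co R Delta ∧ Delta = {a | a ∈ asm ∧ Defends asm co R Delta a}

/-- Set-stable: closed, conflict-free, attacking `Cl({β})` for every `β` outside. -/
def SetStable {S : Type} (asm : Set S) (co : S → S) (R : Set (ABARule S))
    (Delta : Set S) : Prop :=
  Delta ⊆ asm ∧ BABAClosed asm R Delta ∧ ConflictFree co R Delta ∧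
    ∀ b ∈ asm, b ∉ Delta → AttacksSet co R Delta (Cl asm R {b})

/-- Well-founded extension: the intersection of all complete extensions. -/
def WellFoundedExt {S : Type} (asm : Set S) (co : S → S) (R : Set (ABARule S))
    (Delta : Set S) : Prop :=
  Delta = ⋂₀ {B | CompleteExt asm co R B}

/-- Ideal: ⊆-maximal among admissible sets contained in all preferred extensions. -/
def IdealExt {S : Type} (asm : Set S) (co : S → S) (R : Set (ABARule S))
    (Delta : Set S) : Prop :=
  (Admissible asm co R Delta ∧ ∀ B, Preferred asm co R B → Delta ⊆ B) ∧
    ∀ D', (Admissible asm co R D' ∧ ∀ B, Preferred asm co R B → D' ⊆ B) →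
      Delta ⊆ D' → D' = Delta

/-- Quota rule: keep the rules accepted by at least `q` agents. -/
def QuotaAgg {S : Type} {n : ℕ} (Rs : Fin n → Set (ABARule S)) (q : ℕ) :
    Set (ABARule S) :=
  {r | ∃ N' : Finset (Fin n), q ≤ N'.card ∧ ∀ i ∈ N', r ∈ Rs i}

/-- Oligarchic rule: keep the rules accepted by all veto agents. -/
def OligAgg {S : Type} {n : ℕ} (Rs : Fin n → Set (ABARule S)) (Nv : Set (Fin n)) :
    Set (ABARule S) :=
  {r | ∀ j ∈ Nv, r ∈ Rs j}

abbrev Sen4 := Fin 4 ⊕ Fin 4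

def cmap4 : Sen4 → Sen4
  | .inl i => .inr i
  | .inr i => .inr i

def asm4 : Set Sen4 := Set.range Sum.inl

def R11 : Set (ABARule Sen4) := {⟨.inr 1, .inl 0⟩, ⟨.inl 3, .inl 2⟩}

def r11a : ABARule Sen4 := ⟨.inr 0, .inl 2⟩
def r11b : ABARule Sen4 := ⟨.inr 0, .inl 3⟩

/-! The assumptions `A, B, C, D` are `Sum.inl 0, …, Sum.inl 3`; `Sum.inr i` is the contrary of
`Sum.inl i`.

With a rule `¬A ← C` or `¬A ← D` the set `{B, C, D}` is admissible: every closed attacker of it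
must derive `¬B`, hence contain `A`, which `{B, C, D}` attacks; and it is maximal because `A`
attacks `B`. Without these rules nothing derives `¬A`, so the closed attacker `{A}` of `B` is
never counter-attacked. -/

section Derivation

variable {S : Type}

def IsRuleClosed (R : Set (ABARule S)) (s : Set S) : Prop :=
  ∀ r ∈ R, r.body ∈ s → r.head ∈ s

theorem Derives.single {R : Set (ABARule S)} {a c : S} (h : ⟨c, a⟩ ∈ R) : Derives R a c :=
  Relation.ReflTransGen.single h

theorem Derives.mono {R R' : Set (ABARule S)} {a c : S} (hR : R ⊆ R') (h : Derives R a c) :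
    Derives R' a c :=
  Relation.ReflTransGen.mono (fun _ _ hr => hR hr) _ _ h

theorem Derives.mem_of_isRuleClosed {R : Set (ABARule S)} {s : Set S} {a c : S}
    (hs : IsRuleClosed R s) (ha : a ∈ s) (h : Derives R a c) : c ∈ s := by
  induction h with
  | refl => exact ha
  | tail _ hstep ih => exact hs _ hstep ih

theorem babaClosed_of_derives {asm : Set S} {R : Set (ABARule S)} {Δ : Set S}
    (hΔ : Δ ⊆ asm) (h : ∀ d ∈ Δ, ∀ a ∈ asm, Derives R d a → a ∈ Δ) :
    BABAClosed asm R Δ := by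
  ext a
  constructor
  · rintro ⟨ha, d, hd, hda⟩
    exact h d hd a ha hda
  · intro ha
    exact ⟨hΔ ha, a, ha, Relation.ReflTransGen.refl⟩

end Derivation

def R11WithWitnesses : Set (ABARule Sen4) := R11 ∪ {r11a, r11b}

def setBCD : Set Sen4 := {.inl 1, .inl 2, .inl 3}

theorem asm4_eq_insert_setBCD : asm4 = insert (.inl 0) setBCD := by
  ext x
  constructor
  · rintro ⟨i, rfl⟩
    fin_cases i <;> simp [setBCD]
  · rintro (rfl | rfl | rfl | rfl) <;> exact ⟨_, rfl⟩

theorem isRuleClosed_R11WithWitnesses : IsRuleClosed R11WithWitnesses (insert (.inr 0) setBCD) := by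
  intro r hr
  simp only [R11WithWitnesses, R11, r11a, r11b, Set.mem_union, Set.mem_insert_iff,
    Set.mem_singleton_iff] at hr
  rcases hr with (rfl | rfl) | rfl | rfl <;> simp [setBCD]

theorem isRuleClosed_R11_asm4 : IsRuleClosed R11 (insert (.inr 1) asm4) := by
  intro r hr
  simp only [R11, Set.mem_insert_iff, Set.mem_singleton_iff] at hr
  rcases hr with rfl | rfl <;> simp [asm4]

theorem isRuleClosed_R11_A_notB : IsRuleClosed R11 {.inl 0, .inr 1} := by
  intro r hr
  simp only [R11, Set.mem_insert_iff, Set.mem_singleton_iff] at hr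
  rcases hr with rfl | rfl <;> simp

section BCD

variable {R : Set (ABARule Sen4)}

theorem conflictFree_setBCD (hR : R ⊆ R11WithWitnesses) : ConflictFree cmap4 R setBCD := by
  rintro ⟨b, hb, a, ha, hab⟩
  have hmem := (hab.mono hR).mem_of_isRuleClosed isRuleClosed_R11WithWitnesses
    (Set.mem_insert_of_mem _ ha)
  simp only [setBCD, Set.mem_insert_iff, Set.mem_singleton_iff] at hb
  rcases hb with rfl | rfl | rfl <;> simp [cmap4, setBCD] at hmem

theorem admissible_setBCD (hR : R ⊆ R11WithWitnesses)
    (hA : Attacks cmap4 R setBCD (.inl 0)) : Admissible asm4 cmap4 R setBCD := by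
  have hBCDasm : setBCD ⊆ asm4 := asm4_eq_insert_setBCD ▸ Set.subset_insert _ _
  refine ⟨hBCDasm, babaClosed_of_derives hBCDasm fun d hd a ha hda => ?_,
    conflictFree_setBCD hR, ?_⟩
  · have hmem := (hda.mono hR).mem_of_isRuleClosed isRuleClosed_R11WithWitnesses
      (Set.mem_insert_of_mem _ hd)
    obtain ⟨i, rfl⟩ := ha
    simpa using hmem
  · rintro B hB - ⟨b, hb, a, ha, hab⟩
    have haBCD : a ∉ setBCD := fun haBCD => conflictFree_setBCD hR ⟨b, hb, a, haBCD, hab⟩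
    have hAa : a = .inl 0 := by
      have := hB ha
      rw [asm4_eq_insert_setBCD] at this
      exact this.resolve_right haBCD
    exact ⟨.inl 0, hAa ▸ ha, hA⟩

theorem preferred_setBCD (hR : R ⊆ R11WithWitnesses)
    (hAB : (⟨.inr 1, .inl 0⟩ : ABARule Sen4) ∈ R) (hA : Attacks cmap4 R setBCD (.inl 0)) :
    Preferred asm4 cmap4 R setBCD := by
  refine ⟨admissible_setBCD hR hA, fun D' ⟨hD'asm, _, hcf, _⟩ hBCD => ?_⟩
  have hA' : (.inl 0 : Sen4) ∉ D' := fun hA' =>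
    hcf ⟨.inl 1, hBCD (by simp [setBCD]), .inl 0, hA', Derives.single hAB⟩
  rw [asm4_eq_insert_setBCD, Set.subset_insert_iff_of_notMem hA'] at hD'asm
  exact hD'asm.antisymm hBCD

end BCD

theorem attacks_setBCD_A {T : Set (ABARule Sen4)} (hT : T ⊆ {r11a, r11b}) (hne : T.Nonempty) :
    Attacks cmap4 (R11 ∪ T) setBCD (.inl 0) := by
  obtain ⟨r, hr⟩ := hne
  rcases hT hr with rfl | rfl
  · exact ⟨.inl 2, by simp [setBCD], Derives.single (Or.inr hr)⟩
  · exact ⟨.inl 3, by simp [setBCD], Derives.single (Or.inr hr)⟩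

theorem notMem_of_admissible_R11 {Δ : Set Sen4} (hΔ : Admissible asm4 cmap4 R11 Δ) :
    (.inl 1 : Sen4) ∉ Δ := by
  obtain ⟨hΔasm, -, -, hdef⟩ := hΔ
  intro hB
  have hAclosed : BABAClosed asm4 R11 {.inl 0} := by
    refine babaClosed_of_derives (by simp [asm4]) fun d hd a ha hda => ?_
    rw [Set.mem_singleton_iff] at hd
    subst hd
    obtain ⟨i, rfl⟩ := ha
    simpa using hda.mem_of_isRuleClosed isRuleClosed_R11_A_notB (by simp)
  have hAB : AttacksSet cmap4 R11 {.inl 0} Δ :=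
    ⟨.inl 1, hB, .inl 0, rfl, Derives.single (c := (.inr 1 : Sen4)) (by simp [R11])⟩
  obtain ⟨b, hb, a, ha, hab⟩ := hdef {.inl 0} (by simp [asm4]) hAclosed hAB
  rw [Set.mem_singleton_iff] at hb
  subst hb
  have := hab.mem_of_isRuleClosed isRuleClosed_R11_asm4 (Set.mem_insert_of_mem _ (hΔasm ha))
  simp [cmap4, asm4] at this

theorem preferredAcceptability_disjunctive :
    ∀ T ⊆ ({r11a, r11b} : Set (ABARule Sen4)),
      (T ≠ ∅ →
        ∃ Delta, Preferred asm4 cmap4 (R11 ∪ T) Delta ∧ (Sum.inl 1 : Sen4) ∈ Delta) ∧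
      (T = ∅ →
        ∀ Delta, Preferred asm4 cmap4 (R11 ∪ T) Delta → (Sum.inl 1 : Sen4) ∉ Delta) := by
  intro T hT
  constructor
  · intro hne
    have hR : R11 ∪ T ⊆ R11WithWitnesses := Set.union_subset_union_right R11 hT
    have hAB : (⟨.inr 1, .inl 0⟩ : ABARule Sen4) ∈ R11 ∪ T := Or.inl (by simp [R11])
    have hA := attacks_setBCD_A hT (Set.nonempty_iff_ne_empty.2 hne)
    exact ⟨setBCD, preferred_setBCD hR hAB hA, by simp [setBCD]⟩
  · rintro rfl Δ hΔ
    rw [Set.union_empty] at hΔ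
    exact notMem_of_admissible_R11 hΔ.1
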